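/- Assume good X, ↑good inp, ↑goodAbs binp, |dom inp| < |var| and |dom binp| < |var|. Then: (1) if (ys,y) ≠ (xs,x) then fresh ys y (Var xs x); (2) if ↑(fresh ys y) inp and ↑(freshAbs ys y) binp then fresh ys y (Op δ inp binp); (3) if (ys,y) = (xs,x) or fresh ys y X, then freshAbs ys y (Abs xs x X). -/

import Mathlib

/-!
On quasiterms the three rules are just the constructors of `QFresh`/`QFreshAbs`, so everything
reduces to freshness being invariant under alpha-equivalence, which makes `fresh (tmk X)` agree
with `QFresh X`. The only nontrivial case of that invariance is an abstraction
`qAbs xs x X ~ qAbs xs x' X'`, witnessed by some `y0` fresh for both bodies with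
`X[y0 ∧ x] ~ X'[y0 ∧ x']`: freshness is equivariant under swapping, so a variable fresh for `X`
is carried by the permutation `(y0 x') ∘ (y0 x)` to one fresh for `X'`, and this permutation
fixes every variable except `y0`, `x`, `x'`, which are handled directly.
-/

open scoped Classical

universe u

section Binding

variable (var varsort index bindex opsym : Type u)

/-! ### Inputs -/

/-- An `(α,β)`-input: a partial function from `α` to `β`. -/
abbrev Input (α β : Type u) : Type u := α → Option β

/-- The domain of an input. -/
def idom {α β : Type u} (inp : Input α β) : Set α := {a | inp a ≠ none}

/-- The componentwise lifting of a predicate to inputs. -/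
def liftP {α β : Type u} (P : β → Prop) (inp : Input α β) : Prop :=
  ∀ a b, inp a = some b → P b

/-- The componentwise lifting of a function to inputs. -/
def liftF {α β γ : Type u} (f : β → γ) (inp : Input α β) : Input α γ :=
  fun a => (inp a).map f

/-- An input is small if its domain has cardinality smaller than that of `var`. -/
def smallDom {α β : Type u} (inp : Input α β) : Prop :=
  Cardinal.mk (idom inp) < Cardinal.mk var

/-! ### Quasiterms -/

mutual
/-- Quasiterms: raw terms before quotienting by alpha-equivalence. -/
inductive QTerm : Type u where
  | qVar : varsort → var → QTerm
  | qOp : opsym → (index → Option QTerm) → (bindex → Option QAbs) → QTerm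
/-- Quasiabstractions. -/
inductive QAbs : Type u where
  | qAbs : varsort → var → QTerm → QAbs
end

/-- Transposition of two variables. -/
noncomputable def swapVar (z1 z2 x : var) : var :=
  if x = z1 then z2 else if x = z2 then z1 else x

/-- Sort-aware transposition of variables (acts only on variables of varsort `zs`). -/
noncomputable def swapVarS (zs xs : varsort) (z1 z2 x : var) : var :=
  if xs = zs then swapVar var z1 z2 x else x

variable {var varsort index bindex opsym}

/-- Swapping of the variables `z1`, `z2` at varsort `zs` in a quasiterm
(transposing them everywhere, including binding positions). -/
noncomputable def qSwap (z1 z2 : var) (zs : varsort) :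
    QTerm var varsort index bindex opsym → QTerm var varsort index bindex opsym :=
  QTerm.rec (motive_1 := fun _ => QTerm var varsort index bindex opsym)
    (motive_2 := fun _ => QAbs var varsort index bindex opsym)
    (motive_3 := fun _ => Option (QTerm var varsort index bindex opsym))
    (motive_4 := fun _ => Option (QAbs var varsort index bindex opsym))
    (fun xs x => .qVar xs (swapVarS var varsort zs xs z1 z2 x))
    (fun d _ _ rinp rbinp => .qOp d rinp rbinp)
    (fun xs x _ rX => .qAbs xs (swapVarS var varsort zs xs z1 z2 x) rX)
    none (fun _ r => some r) none (fun _ r => some r)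

/-- Swapping of variables in a quasiabstraction. -/
noncomputable def qSwapAbs (z1 z2 : var) (zs : varsort) :
    QAbs var varsort index bindex opsym → QAbs var varsort index bindex opsym
  | .qAbs xs x X => .qAbs xs (swapVarS var varsort zs xs z1 z2 x) (qSwap z1 z2 zs X)

/-! ### Freshness and goodness -/

mutual
/-- `QFresh ys y X`: the variable `y` of varsort `ys` has no free occurrence in `X`. -/
inductive QFresh : varsort → var → QTerm var varsort index bindex opsym → Prop where
  | qVar : ∀ {ys y xs x}, (ys, y) ≠ (xs, x) → QFresh ys y (.qVar xs x)
  | qOp : ∀ {ys y d inp binp}, (∀ i X, inp i = some X → QFresh ys y X) →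
      (∀ j A, binp j = some A → QFreshAbs ys y A) → QFresh ys y (.qOp d inp binp)
/-- Freshness for quasiabstractions. -/
inductive QFreshAbs : varsort → var → QAbs var varsort index bindex opsym → Prop where
  | qAbs_bound : ∀ {xs x X}, QFreshAbs xs x (.qAbs xs x X)
  | qAbs_body : ∀ {ys y xs x X}, QFresh ys y X → QFreshAbs ys y (.qAbs xs x X)
end

mutual
/-- Good quasiterms: all constructors branch less than `|var|`. -/
inductive QGood : QTerm var varsort index bindex opsym → Prop where
  | qVar : ∀ {xs x}, QGood (.qVar xs x)
  | qOp : ∀ {d inp binp}, (∀ i X, inp i = some X → QGood X) →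
      (∀ j A, binp j = some A → QGoodAbs A) →
      smallDom var inp → smallDom var binp → QGood (.qOp d inp binp)
/-- Good quasiabstractions. -/
inductive QGoodAbs : QAbs var varsort index bindex opsym → Prop where
  | qAbs : ∀ {xs x X}, QGood X → QGoodAbs (.qAbs xs x X)
end

/-! ### Alpha-equivalence -/

mutual
/-- Alpha-equivalence of quasiterms. -/
inductive Alpha : QTerm var varsort index bindex opsym →
    QTerm var varsort index bindex opsym → Prop where
  | qVar : ∀ {xs x}, Alpha (.qVar xs x) (.qVar xs x)
  | qOp : ∀ {d inp binp inp' binp'},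
      (∀ i, inp i = none ↔ inp' i = none) →
      (∀ i X X', inp i = some X → inp' i = some X' → Alpha X X') →
      (∀ j, binp j = none ↔ binp' j = none) →
      (∀ j A A', binp j = some A → binp' j = some A' → AlphaAbs A A') →
      Alpha (.qOp d inp binp) (.qOp d inp' binp')
/-- Alpha-equivalence of quasiabstractions (the exists-fresh formulation). -/
inductive AlphaAbs : QAbs var varsort index bindex opsym →
    QAbs var varsort index bindex opsym → Prop where
  | qAbs : ∀ {xs x x' X X' y}, y ∉ ({x, x'} : Set var) →
      QFresh xs y X → QFresh xs y X' →
      Alpha (qSwap y x xs X) (qSwap y x' xs X') →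
      AlphaAbs (.qAbs xs x X) (.qAbs xs x' X')
end

/-! ### Terms and abstractions as quotients -/

variable (var varsort index bindex opsym)

/-- Terms: quasiterms modulo alpha-equivalence. -/
def Term : Type u := Quot (@Alpha var varsort index bindex opsym)

/-- Abstractions: quasiabstractions modulo alpha-equivalence. -/
def Abstr : Type u := Quot (@AlphaAbs var varsort index bindex opsym)

variable {var varsort index bindex opsym}

/-- The projection from quasiterms to terms. -/
def tmk : QTerm var varsort index bindex opsym → Term var varsort index bindex opsym :=
  Quot.mk _

/-- The projection from quasiabstractions to abstractions. -/
def amk : QAbs var varsort index bindex opsym → Abstr var varsort index bindex opsym :=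
  Quot.mk _

/-- A representative of a term. -/
noncomputable def trep (X : Term var varsort index bindex opsym) :
    QTerm var varsort index bindex opsym := Quot.out X

/-- A representative of an abstraction. -/
noncomputable def arep (A : Abstr var varsort index bindex opsym) :
    QAbs var varsort index bindex opsym := Quot.out A

/-- Good terms. -/
def good (X : Term var varsort index bindex opsym) : Prop := QGood (trep X)

/-- Good abstractions. -/
def goodAbs (A : Abstr var varsort index bindex opsym) : Prop := QGoodAbs (arep A)

/-- The variable-injection constructor on terms. -/
def Var (xs : varsort) (x : var) : Term var varsort index bindex opsym :=
  tmk (.qVar xs x)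

/-- The operation constructor on terms. -/
noncomputable def Op (d : opsym) (inp : Input index (Term var varsort index bindex opsym))
    (binp : Input bindex (Abstr var varsort index bindex opsym)) :
    Term var varsort index bindex opsym :=
  tmk (.qOp d (liftF trep inp) (liftF arep binp))

/-- The abstraction constructor. -/
noncomputable def Abs (xs : varsort) (x : var) (X : Term var varsort index bindex opsym) :
    Abstr var varsort index bindex opsym :=
  amk (.qAbs xs x (trep X))

/-- Freshness on terms. -/
def fresh (ys : varsort) (y : var) (X : Term var varsort index bindex opsym) : Prop :=
  QFresh ys y (trep X)

/-- Freshness on abstractions. -/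
def freshAbs (ys : varsort) (y : var) (A : Abstr var varsort index bindex opsym) : Prop :=
  QFreshAbs ys y (arep A)

/-- Swapping on terms. -/
noncomputable def tswap (X : Term var varsort index bindex opsym)
    (z1 z2 : var) (zs : varsort) : Term var varsort index bindex opsym :=
  tmk (qSwap z1 z2 zs (trep X))

/-! ### Substitution -/

mutual
/-- The graph of capture-avoiding substitution on quasiterms:
`QSubst X Y y ys Z` means that `Z` is a result of substituting `Y` for the free
occurrences of the variable `y` of varsort `ys` in `X` (along a capture-free
representative). -/
inductive QSubst : QTerm var varsort index bindex opsym →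
    QTerm var varsort index bindex opsym → var → varsort →
    QTerm var varsort index bindex opsym → Prop where
  | var_eq : ∀ {Y y ys}, QSubst (.qVar ys y) Y y ys Y
  | var_ne : ∀ {Y y ys xs x}, (xs, x) ≠ (ys, y) → QSubst (.qVar xs x) Y y ys (.qVar xs x)
  | op : ∀ {Y y ys d inp binp inp' binp'},
      (∀ i, inp i = none ↔ inp' i = none) →
      (∀ i X X', inp i = some X → inp' i = some X' → QSubst X Y y ys X') →
      (∀ j, binp j = none ↔ binp' j = none) →
      (∀ j A A', binp j = some A → binp' j = some A' → QSubstAbs A Y y ys A') →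
      QSubst (.qOp d inp binp) Y y ys (.qOp d inp' binp')
/-- The graph of capture-avoiding substitution on quasiabstractions. -/
inductive QSubstAbs : QAbs var varsort index bindex opsym →
    QTerm var varsort index bindex opsym → var → varsort →
    QAbs var varsort index bindex opsym → Prop where
  | abs : ∀ {Y y ys xs x X X'}, (xs, x) ≠ (ys, y) → QFresh xs x Y →
      QSubst X Y y ys X' → QSubstAbs (.qAbs xs x X) Y y ys (.qAbs xs x X')
end

/-- The graph of capture-avoiding substitution on terms. -/
def SubstRel (X Y : Term var varsort index bindex opsym) (y : var) (ys : varsort)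
    (Z : Term var varsort index bindex opsym) : Prop :=
  ∃ qX qZ, tmk qX = X ∧ tmk qZ = Z ∧ QSubst qX (trep Y) y ys qZ

/-- Capture-avoiding substitution on terms: `subst X Y y ys` is `X[Y/y]_ys`. -/
noncomputable def subst (X Y : Term var varsort index bindex opsym)
    (y : var) (ys : varsort) : Term var varsort index bindex opsym :=
  if h : ∃ Z, SubstRel X Y y ys Z then h.choose else X

/-- The graph of capture-avoiding substitution on abstractions. -/
def SubstAbsRel (A : Abstr var varsort index bindex opsym)
    (Y : Term var varsort index bindex opsym) (y : var) (ys : varsort)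
    (B : Abstr var varsort index bindex opsym) : Prop :=
  ∃ qA qB, amk qA = A ∧ amk qB = B ∧ QSubstAbs qA (trep Y) y ys qB

/-- Capture-avoiding substitution on abstractions: `substAbs A Y y ys` is `A[Y/y]_ys`. -/
noncomputable def substAbs (A : Abstr var varsort index bindex opsym)
    (Y : Term var varsort index bindex opsym) (y : var) (ys : varsort) :
    Abstr var varsort index bindex opsym :=
  if h : ∃ B, SubstAbsRel A Y y ys B then h.choose else A

/-! ### Parallel substitution -/

mutual
/-- The graph of capture-avoiding parallel substitution on quasiterms, along an
assignment `ρ : varsort → var → Option qterm`. -/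
inductive QPSubst : QTerm var varsort index bindex opsym →
    (varsort → var → Option (QTerm var varsort index bindex opsym)) →
    QTerm var varsort index bindex opsym → Prop where
  | var_some : ∀ {ρ xs x Y}, ρ xs x = some Y → QPSubst (.qVar xs x) ρ Y
  | var_none : ∀ {ρ xs x}, ρ xs x = none → QPSubst (.qVar xs x) ρ (.qVar xs x)
  | op : ∀ {ρ d inp binp inp' binp'},
      (∀ i, inp i = none ↔ inp' i = none) →
      (∀ i X X', inp i = some X → inp' i = some X' → QPSubst X ρ X') →
      (∀ j, binp j = none ↔ binp' j = none) →
      (∀ j A A', binp j = some A → binp' j = some A' → QPSubstAbs A ρ A') →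
      QPSubst (.qOp d inp binp) ρ (.qOp d inp' binp')
/-- The graph of capture-avoiding parallel substitution on quasiabstractions. -/
inductive QPSubstAbs : QAbs var varsort index bindex opsym →
    (varsort → var → Option (QTerm var varsort index bindex opsym)) →
    QAbs var varsort index bindex opsym → Prop where
  | abs : ∀ {ρ xs x X X'}, ρ xs x = none →
      (∀ ys y Y, ρ ys y = some Y → QFresh xs x Y) →
      QPSubst X ρ X' → QPSubstAbs (.qAbs xs x X) ρ (.qAbs xs x X')
end

/-- Turning a term-valued assignment into a quasiterm-valued one, by picking
representatives. -/
noncomputable def qassign (ρ : varsort → var → Option (Term var varsort index bindex opsym)) :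
    varsort → var → Option (QTerm var varsort index bindex opsym) :=
  fun xs x => (ρ xs x).map trep

/-- The graph of parallel substitution on terms. -/
def PSubstRel (X : Term var varsort index bindex opsym)
    (ρ : varsort → var → Option (Term var varsort index bindex opsym))
    (Z : Term var varsort index bindex opsym) : Prop :=
  ∃ qX qZ, tmk qX = X ∧ tmk qZ = Z ∧ QPSubst qX (qassign ρ) qZ

/-- Capture-avoiding parallel substitution on terms: `psubst X ρ` is `X[ρ]`. -/
noncomputable def psubst (X : Term var varsort index bindex opsym)
    (ρ : varsort → var → Option (Term var varsort index bindex opsym)) :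
    Term var varsort index bindex opsym :=
  if h : ∃ Z, PSubstRel X ρ Z then h.choose else X

/-- The graph of parallel substitution on abstractions. -/
def PSubstAbsRel (A : Abstr var varsort index bindex opsym)
    (ρ : varsort → var → Option (Term var varsort index bindex opsym))
    (B : Abstr var varsort index bindex opsym) : Prop :=
  ∃ qA qB, amk qA = A ∧ amk qB = B ∧ QPSubstAbs qA (qassign ρ) qB

/-- Capture-avoiding parallel substitution on abstractions. -/
noncomputable def psubstAbs (A : Abstr var varsort index bindex opsym)
    (ρ : varsort → var → Option (Term var varsort index bindex opsym)) :
    Abstr var varsort index bindex opsym :=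
  if h : ∃ B, PSubstAbsRel A ρ B then h.choose else A

theorem swapVar_eq_swap (z1 z2 : var) : swapVar var z1 z2 = Equiv.swap z1 z2 := by
  funext x
  rw [Equiv.swap_apply_def]
  rfl

theorem swapVarS_involutive (zs xs : varsort) (z1 z2 : var) :
    Function.Involutive (swapVarS var varsort zs xs z1 z2) := by
  intro x
  unfold swapVarS
  split_ifs <;> simp [swapVar_eq_swap]

theorem liftP_iff_of_rel {α β γ : Type u} {P : β → Prop} {Q : γ → Prop}
    {inp : Input α β} {inp' : Input α γ} (hdom : ∀ a, inp a = none ↔ inp' a = none)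
    (hPQ : ∀ a b c, inp a = some b → inp' a = some c → (P b ↔ Q c)) :
    liftP P inp ↔ liftP Q inp' := by
  constructor
  · intro hP a c hc
    obtain ⟨b, hb⟩ := Option.ne_none_iff_exists'.mp fun hn => by simp [(hdom a).mp hn] at hc
    exact (hPQ a b c hb hc).mp (hP a b hb)
  · intro hQ a b hb
    obtain ⟨c, hc⟩ := Option.ne_none_iff_exists'.mp fun hn => by simp [(hdom a).mpr hn] at hb
    exact (hPQ a b c hb hc).mpr (hQ a c hc)

theorem liftP_liftF {α β γ : Type u} {P : γ → Prop} {f : β → γ} {inp : Input α β} :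
    liftP P (liftF f inp) ↔ liftP (P ∘ f) inp := by
  simp [liftP, liftF]

theorem qFresh_qOp_iff {ys : varsort} {y : var} {d : opsym}
    {inp : Input index (QTerm var varsort index bindex opsym)}
    {binp : Input bindex (QAbs var varsort index bindex opsym)} :
    QFresh ys y (.qOp d inp binp) ↔ liftP (QFresh ys y) inp ∧ liftP (QFreshAbs ys y) binp :=
  ⟨fun | .qOp hi hb => ⟨hi, hb⟩, fun ⟨hi, hb⟩ => .qOp hi hb⟩

theorem qFreshAbs_qAbs_iff {ys xs : varsort} {y x : var}
    {X : QTerm var varsort index bindex opsym} :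
    QFreshAbs ys y (.qAbs xs x X) ↔ (ys, y) = (xs, x) ∨ QFresh ys y X := by
  constructor
  · rintro (_ | hX)
    · exact .inl rfl
    · exact .inr hX
  · rintro (he | hX)
    · obtain ⟨rfl, rfl⟩ := Prod.mk.inj he
      exact .qAbs_bound
    · exact .qAbs_body hX

theorem qSwap_qOp (z1 z2 : var) (zs : varsort) (d : opsym)
    (inp : Input index (QTerm var varsort index bindex opsym))
    (binp : Input bindex (QAbs var varsort index bindex opsym)) :
    qSwap z1 z2 zs (.qOp d inp binp) =
      .qOp d (liftF (qSwap z1 z2 zs) inp) (liftF (qSwapAbs z1 z2 zs) binp) := by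
  show QTerm.qOp d _ _ = .qOp d (fun i => (inp i).map _) (fun j => (binp j).map _)
  congr 1
  · funext i
    cases inp i <;> rfl
  · funext j
    rcases binp j with _ | ⟨_, _, _⟩ <;> rfl

theorem qSwap_involutive (z1 z2 : var) (zs : varsort) :
    Function.Involutive (qSwap z1 z2 zs : QTerm var varsort index bindex opsym → _) := by
  intro X
  refine QTerm.rec (motive_1 := fun X => qSwap z1 z2 zs (qSwap z1 z2 zs X) = X)
    (motive_2 := fun A => qSwapAbs z1 z2 zs (qSwapAbs z1 z2 zs A) = A)
    (motive_3 := fun o => (o.map (qSwap z1 z2 zs)).map (qSwap z1 z2 zs) = o)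
    (motive_4 := fun o => (o.map (qSwapAbs z1 z2 zs)).map (qSwapAbs z1 z2 zs) = o)
    ?_ ?_ ?_ rfl ?_ rfl ?_ X
  · intro xs x
    simp only [qSwap, swapVarS_involutive _ _ _ _ x]
  · intro d inp binp ih1 ih2
    simp only [qSwap_qOp]
    congr 1
    · exact funext ih1
    · exact funext ih2
  · intro xs x X ih
    simp only [qSwapAbs, swapVarS_involutive _ _ _ _ x, ih]
  · intro X ih
    simp [ih]
  · intro A ih
    simp [ih]

theorem QFresh.swap {ys : varsort} {y : var} {X : QTerm var varsort index bindex opsym}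
    (h : QFresh ys y X) (z1 z2 : var) (zs : varsort) :
    QFresh ys (swapVarS var varsort zs ys z1 z2 y) (qSwap z1 z2 zs X) := by
  refine QFresh.rec
    (motive_1 := fun X _ => QFresh ys (swapVarS var varsort zs ys z1 z2 y) (qSwap z1 z2 zs X))
    (motive_2 := fun A _ =>
      QFreshAbs ys (swapVarS var varsort zs ys z1 z2 y) (qSwapAbs z1 z2 zs A))
    ?_ ?_ .qAbs_bound (fun _ ih => .qAbs_body ih) h
  · intro xs x hne
    refine .qVar fun he => hne ?_
    obtain ⟨rfl, hyx⟩ := Prod.mk.inj he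
    rw [(swapVarS_involutive _ _ _ _).injective hyx]
  · intro d inp binp _ _ ih1 ih2
    rw [qSwap_qOp]
    refine .qOp (fun i X hX => ?_) (fun j A hA => ?_)
    · obtain ⟨X0, hX0, rfl⟩ := Option.map_eq_some_iff.mp hX
      exact ih1 i X0 hX0
    · obtain ⟨A0, hA0, rfl⟩ := Option.map_eq_some_iff.mp hA
      exact ih2 j A0 hA0

theorem QFresh.of_swap {ys : varsort} {y : var} {X : QTerm var varsort index bindex opsym}
    {z1 z2 : var} {zs : varsort} (h : QFresh ys y (qSwap z1 z2 zs X)) :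
    QFresh ys (swapVarS var varsort zs ys z1 z2 y) X := by
  simpa only [qSwap_involutive z1 z2 zs X] using h.swap z1 z2 zs

theorem qFreshAbs_qAbs_of_swap {xs ys : varsort} {x x' y0 y : var}
    {X X' : QTerm var varsort index bindex opsym}
    (hX : QFresh xs y0 X) (hX' : QFresh xs y0 X')
    (hswap : ∀ ys y, QFresh ys y (qSwap y0 x xs X) → QFresh ys y (qSwap y0 x' xs X'))
    (h : QFreshAbs ys y (.qAbs xs x X)) : QFreshAbs ys y (.qAbs xs x' X') := by
  have transfer : ∀ {y}, QFresh ys y X →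
      QFresh ys (swapVarS var varsort xs ys y0 x' (swapVarS var varsort xs ys y0 x y)) X' :=
    fun hf => (hswap ys _ (hf.swap y0 x xs)).of_swap
  rw [qFreshAbs_qAbs_iff] at h ⊢
  by_cases hs : ys ≠ xs
  · have hyx : (ys, y) ≠ (xs, x) := fun he => hs (Prod.mk.inj he).1
    simpa [swapVarS, hs] using transfer (h.resolve_left hyx)
  obtain rfl : ys = xs := not_not.mp hs
  by_cases hyx' : y = x'
  · exact .inl (by rw [hyx'])
  refine .inr ?_
  by_cases hyy0 : y = y0
  · rwa [hyy0]
  by_cases hyx : y = x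
  · subst hyx
    simpa [swapVarS, swapVar_eq_swap, Equiv.swap_apply_of_ne_of_ne hyy0 hyx'] using transfer hX
  · have hy := h.resolve_left fun he => hyx (Prod.mk.inj he).2
    simpa [swapVarS, swapVar_eq_swap, Equiv.swap_apply_of_ne_of_ne hyy0 hyx',
      Equiv.swap_apply_of_ne_of_ne hyy0 hyx] using transfer hy

theorem qFreshAbs_qAbs_iff_of_swap {xs ys : varsort} {x x' y0 y : var}
    {X X' : QTerm var varsort index bindex opsym} (hX : QFresh xs y0 X) (hX' : QFresh xs y0 X')
    (hswap : ∀ ys y, QFresh ys y (qSwap y0 x xs X) ↔ QFresh ys y (qSwap y0 x' xs X')) :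
    QFreshAbs ys y (.qAbs xs x X) ↔ QFreshAbs ys y (.qAbs xs x' X') :=
  ⟨qFreshAbs_qAbs_of_swap hX hX' fun ys y => (hswap ys y).mp,
    qFreshAbs_qAbs_of_swap hX' hX fun ys y => (hswap ys y).mpr⟩

theorem Alpha.qFresh_iff {X X' : QTerm var varsort index bindex opsym} (h : Alpha X X')
    (ys : varsort) (y : var) : QFresh ys y X ↔ QFresh ys y X' := by
  refine Alpha.rec
    (motive_1 := fun X X' _ => ∀ ys y, QFresh ys y X ↔ QFresh ys y X')
    (motive_2 := fun A A' _ => ∀ ys y, QFreshAbs ys y A ↔ QFreshAbs ys y A')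
    (fun _ _ => Iff.rfl) ?_ ?_ h ys y
  · intro d inp binp inp' binp' hdom _ hbdom _ ih ihb ys y
    rw [qFresh_qOp_iff, qFresh_qOp_iff]
    exact and_congr (liftP_iff_of_rel hdom fun i X X' hX hX' => ih i X X' hX hX' ys y)
      (liftP_iff_of_rel hbdom fun j A A' hA hA' => ihb j A A' hA hA' ys y)
  · intro xs x x' X X' y0 _ hX hX' _ ih ys y
    exact qFreshAbs_qAbs_iff_of_swap hX hX' ih

theorem AlphaAbs.qFreshAbs_iff {A A' : QAbs var varsort index bindex opsym} (h : AlphaAbs A A')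
    (ys : varsort) (y : var) : QFreshAbs ys y A ↔ QFreshAbs ys y A' := by
  obtain ⟨_, hX, hX', hal⟩ := h
  exact qFreshAbs_qAbs_iff_of_swap hX hX' hal.qFresh_iff

theorem fresh_tmk {ys : varsort} {y : var} {X : QTerm var varsort index bindex opsym} :
    fresh ys y (tmk X) ↔ QFresh ys y X :=
  Iff.of_eq (congrArg (Quot.lift (QFresh ys y) fun _ _ h => propext (h.qFresh_iff ys y))
    (Quot.out_eq (tmk X)))

theorem freshAbs_amk {ys : varsort} {y : var} {A : QAbs var varsort index bindex opsym} :
    freshAbs ys y (amk A) ↔ QFreshAbs ys y A :=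
  Iff.of_eq (congrArg (Quot.lift (QFreshAbs ys y) fun _ _ h => propext (h.qFreshAbs_iff ys y))
    (Quot.out_eq (amk A)))

/-- implicational simplification rules for freshness. -/
theorem fresh_simp_imp (hinf : Cardinal.aleph0 ≤ Cardinal.mk var)
    (hreg : (Cardinal.mk var).IsRegular)
    (X : Term var varsort index bindex opsym) (d : opsym)
    (inp : Input index (Term var varsort index bindex opsym)) (binp : Input bindex (Abstr var varsort index bindex opsym))
    (hX : good X) (hinp : liftP good inp) (hbinp : liftP goodAbs binp)
    (hsi : smallDom var inp) (hsb : smallDom var binp)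
    (ys xs : varsort) (y x : var) :
    ((ys, y) ≠ (xs, x) → fresh ys y (Var xs x : Term var varsort index bindex opsym)) ∧
    (liftP (fresh ys y) inp → liftP (freshAbs ys y) binp →
      fresh ys y (Op d inp binp)) ∧
    ((ys, y) = (xs, x) ∨ fresh ys y X → freshAbs ys y (Abs xs x X)) :=
  ⟨fun hne => fresh_tmk.mpr (.qVar hne),
    fun hfi hfb => fresh_tmk.mpr (qFresh_qOp_iff.mpr ⟨liftP_liftF.mpr hfi, liftP_liftF.mpr hfb⟩),
    fun h => freshAbs_amk.mpr (qFreshAbs_qAbs_iff.mpr h)⟩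

end Binding
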